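/- arXiv:2411.06290 — 2 statements merged into one kernel-verified Lean document; each statement's English description precedes it below -/
import Mathlib

section
/- Let σ ∈ C¹(ℝ) with σ' > 0 everywhere, and let f₁,…,f_N ∈ L²(Y) be weakly linearly independent. If (a,b) ∈ ℝ × L²(Y) is a critical point of T_{F,r}(a,b) = ∑_j σ(a − ∫_Y b f_j dz) r_j, then r = 0. -/
open MeasureTheory

def WeaklyLinearIndependent {ι α : Type*} [Fintype ι] [MeasurableSpace α] (μ : Measure α)
    (f : ι → α → ℝ) : Prop :=
  ∀ lam : ι → ℝ, (∀ᵐ y ∂μ, ∑ j, lam j * f j y = 0) → ∑ j, lam j = 0 → lam = 0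

theorem WeaklyLinearIndependent.eq_zero_of_weighted {ι α : Type*} [Fintype ι]
    [MeasurableSpace α] {μ : Measure α} {f : ι → α → ℝ} (hf : WeaklyLinearIndependent μ f)
    {c r : ι → ℝ} (hc : ∀ j, c j ≠ 0) (hsum : ∑ j, c j * r j = 0)
    (hcomb : ∀ᵐ y ∂μ, ∑ j, c j * r j * f j y = 0) : r = 0 := by
  have hcr : c * r = 0 := hf (c * r) hcomb hsum
  funext j
  exact (mul_eq_zero.1 (congrFun hcr j)).resolve_left (hc j)

theorem critical_point_implies_r_zero_general
    {d N : ℕ} (Y : Set (Fin d → ℝ))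
    (σ : ℝ → ℝ) (hσ' : ∀ x, 0 < deriv σ x)
    (f : Fin N → (Fin d → ℝ) → ℝ)
    (hwli : ∀ lam : Fin N → ℝ,
      (∀ᵐ y ∂(volume.restrict Y), ∑ j, lam j * f j y = 0) →
      (∑ j, lam j = 0) → lam = 0)
    (r : Fin N → ℝ) (a : ℝ)
    (b : (Fin d → ℝ) → ℝ)
    (hcritA : ∑ j, deriv σ (a - ∫ z, b z * f j z ∂(volume.restrict Y)) * r j = 0)
    (hcritB : ∀ᵐ y ∂(volume.restrict Y),
      ∑ j, deriv σ (a - ∫ z, b z * f j z ∂(volume.restrict Y)) * r j * f j y = 0) :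
    r = 0 :=
  WeaklyLinearIndependent.eq_zero_of_weighted hwli (fun _ => (hσ' _).ne') hcritA hcritB

/-- If `σ ∈ C¹(ℝ)` with `σ' > 0` everywhere and `f₁,…,f_N ∈ L²(Y)` are weakly
linearly independent, then any critical point `(a,b)` of
`T_{F,r}(a,b) = ∑_j σ(a − ∫_Y b f_j) r_j` (i.e. `∑_j σ'(ξ_j) r_j = 0` and
`∑_j σ'(ξ_j) r_j f_j = 0` in `L²(Y)`, with `ξ_j = a − ∫_Y b f_j`) forces `r = 0`. -/
theorem critical_point_implies_r_zero
    {d N : ℕ} (Y : Set (Fin d → ℝ)) (hYmeas : MeasurableSet Y)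
    (σ : ℝ → ℝ) (hσ : ContDiff ℝ 1 σ) (hσ' : ∀ x, 0 < deriv σ x)
    (f : Fin N → (Fin d → ℝ) → ℝ) (hf : ∀ j, MemLp (f j) 2 (volume.restrict Y))
    (hwli : ∀ lam : Fin N → ℝ,
      (∀ᵐ y ∂(volume.restrict Y), ∑ j, lam j * f j y = 0) →
      (∑ j, lam j = 0) → lam = 0)
    (r : Fin N → ℝ) (a : ℝ)
    (b : (Fin d → ℝ) → ℝ) (hb : MemLp b 2 (volume.restrict Y))
    (hcritA : ∑ j, deriv σ (a - ∫ z, b z * f j z ∂(volume.restrict Y)) * r j = 0)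
    (hcritB : ∀ᵐ y ∂(volume.restrict Y),
      ∑ j, deriv σ (a - ∫ z, b z * f j z ∂(volume.restrict Y)) * r j * f j y = 0) :
    r = 0 :=
  critical_point_implies_r_zero_general Y σ hσ' f hwli r a b hcritA hcritB
end

section
/- Let 𝒜 ⊆ ℝ × L²(Y) be nonempty, closed, bounded and convex, σ : ℝ → ℝ Lipschitz, f₁,…,f_N ∈ L²(Y), r ∈ ℝ^N. Then the functional T_{F,r}(a,b) = ∑_{j=1}^N σ(a − ∫_Y b f_j dz) r_j attains its minimum on 𝒜. -/
/-!
`T_{F,r}` factors as `g ∘ Φ` with `Φ (a, b) = (a, (⟪f_j, b⟫)_j)` continuous linear into the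
finite-dimensional space `ℝ × ℝ^N` and `g` continuous, so it suffices that `Φ '' 𝒜` is compact.
It is bounded, and it is closed because, in a Hilbert space, a decreasing sequence of nonempty
bounded closed convex sets has nonempty intersection: by the parallelogram law their points of
minimal norm form a Cauchy sequence. This replaces the weak compactness of `𝒜`.
-/

open MeasureTheory Filter Set

section Hilbert

variable {E : Type*} [NormedAddCommGroup E] [InnerProductSpace ℝ E]

theorem norm_sub_sq_le_of_forall_norm_le {s : Set E} (hs : Convex ℝ s) {p x : E}
    (hp : p ∈ s) (hx : x ∈ s) (hmin : ∀ w ∈ s, ‖p‖ ≤ ‖w‖) :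
    ‖x - p‖ ^ 2 ≤ 2 * ‖x‖ ^ 2 - 2 * ‖p‖ ^ 2 := by
  have hmid : ‖p‖ ≤ ‖x + p‖ / 2 := by
    have := hmin _ (hs hx hp (by norm_num : (0:ℝ) ≤ 2⁻¹) (by norm_num : (0:ℝ) ≤ 2⁻¹) (by norm_num))
    rwa [← smul_add, norm_smul, Real.norm_of_nonneg (by norm_num), inv_mul_eq_div] at this
  have hpar := parallelogram_law_with_norm ℝ x p
  nlinarith [norm_nonneg p]

theorem cauchySeq_of_norm_sub_sq_le {F : Type*} [SeminormedAddCommGroup F] {u : ℕ → F}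
    {a : ℕ → ℝ} (ha : Monotone a) (ha' : BddAbove (range a))
    (hu : ∀ n m, n ≤ m → ‖u m - u n‖ ^ 2 ≤ a m - a n) : CauchySeq u := by
  have hlim := tendsto_atTop_ciSup ha ha'
  have hle : ∀ N, a N ≤ ⨆ n, a n := le_ciSup ha'
  refine cauchySeq_of_le_tendsto_0 (fun N => √((⨆ n, a n) - a N)) (fun n m N hn hm => ?_) ?_
  · have key : ∀ n m, N ≤ n → n ≤ m → ‖u m - u n‖ ≤ √((⨆ n, a n) - a N) := fun n m hn hnm =>
      Real.le_sqrt_of_sq_le ((hu n m hnm).trans (by linarith [hle m, ha hn]))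
    rw [dist_eq_norm]
    rcases le_total n m with hnm | hmn
    · rw [norm_sub_rev]; exact key n m hn hnm
    · exact key m n hm hmn
  · simpa using ((tendsto_const_nhds (x := ⨆ n, a n)).sub hlim).sqrt

variable [CompleteSpace E]

theorem exists_forall_norm_le_of_convex {s : Set E} (hne : s.Nonempty) (hcl : IsClosed s)
    (hconv : Convex ℝ s) : ∃ p ∈ s, ∀ w ∈ s, ‖p‖ ≤ ‖w‖ := by
  obtain ⟨p, hp, hinf⟩ := exists_norm_eq_iInf_of_complete_convex hne hcl.isComplete hconv 0
  have : Nonempty s := hne.to_subtype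
  refine ⟨p, hp, fun w hw => ?_⟩
  have := ciInf_le ⟨0, forall_mem_range.2 fun w : s => norm_nonneg (0 - (w : E))⟩ (⟨w, hw⟩ : s)
  rw [← hinf] at this
  simpa using this

theorem nonempty_iInter_of_antitone_convex {s : ℕ → Set E} (hanti : Antitone s)
    (hne : ∀ n, (s n).Nonempty) (hcl : ∀ n, IsClosed (s n)) (hconv : ∀ n, Convex ℝ (s n))
    (hbdd : Bornology.IsBounded (s 0)) : (⋂ n, s n).Nonempty := by
  choose p hp hmin using fun n => exists_forall_norm_le_of_convex (hne n) (hcl n) (hconv n)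
  have hmono : Monotone fun n => 2 * ‖p n‖ ^ 2 := fun n m hnm => by
    dsimp only; gcongr; exact hmin n _ (hanti hnm (hp m))
  obtain ⟨R, hR⟩ := isBounded_iff_forall_norm_le.1 hbdd
  have hbddAbove : BddAbove (range fun n => 2 * ‖p n‖ ^ 2) :=
    ⟨2 * R ^ 2, forall_mem_range.2 fun n => by
      gcongr; exact hR _ (hanti (Nat.zero_le n) (hp n))⟩
  have hcauchy : CauchySeq p := cauchySeq_of_norm_sub_sq_le hmono hbddAbove fun n m hnm =>
    norm_sub_sq_le_of_forall_norm_le (hconv n) (hp n) (hanti hnm (hp m)) (hmin n)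
  obtain ⟨q, hq⟩ := cauchySeq_tendsto_of_complete hcauchy
  exact ⟨q, mem_iInter.2 fun n =>
    (hcl n).mem_of_tendsto hq (eventually_atTop.2 ⟨n, fun m hm => hanti hm (hp m)⟩)⟩


theorem ContinuousLinearMap.isClosed_image_of_convex {F : Type*} [NormedAddCommGroup F]
    [NormedSpace ℝ F] (Φ : E →L[ℝ] F) {s : Set E} (hcl : IsClosed s) (hconv : Convex ℝ s)
    (hbdd : Bornology.IsBounded s) : IsClosed (Φ '' s) := by
  refine isClosed_of_closure_subset fun x hx => ?_
  set t : ℕ → Set E := fun n => s ∩ Φ ⁻¹' Metric.closedBall x (1 / (n + 1))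
  have hanti : Antitone t := fun n m hnm =>
    inter_subset_inter_right _ <| preimage_mono <| Metric.closedBall_subset_closedBall <|
      Nat.one_div_le_one_div hnm
  have hne : ∀ n, (t n).Nonempty := fun n => by
    obtain ⟨-, ⟨p, hp, rfl⟩, hdist⟩ :=
      Metric.mem_closure_iff.1 hx (1 / (n + 1)) Nat.one_div_pos_of_nat
    exact ⟨p, hp, by simpa [dist_comm] using hdist.le⟩
  obtain ⟨q, hq⟩ := nonempty_iInter_of_antitone_convex hanti hne
    (fun n => hcl.inter (Metric.isClosed_closedBall.preimage Φ.continuous))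
    (fun n => hconv.inter ((convex_closedBall x _).linear_preimage Φ.toLinearMap))
    (hbdd.subset inter_subset_left)
  rw [mem_iInter] at hq
  refine ⟨q, (hq 0).1, dist_le_zero.1 ?_⟩
  exact ge_of_tendsto' tendsto_one_div_add_atTop_nhds_zero_nat fun n => (hq n).2

theorem exists_isMinOn_comp_of_convex {F : Type*} [NormedAddCommGroup F] [NormedSpace ℝ F]
    [FiniteDimensional ℝ F] (Φ : E →L[ℝ] F) {g : F → ℝ} (hg : Continuous g) {s : Set E}
    (hne : s.Nonempty) (hcl : IsClosed s) (hconv : Convex ℝ s) (hbdd : Bornology.IsBounded s) :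
    ∃ p ∈ s, IsMinOn (g ∘ Φ) s p := by
  have hcpt : IsCompact (Φ '' s) := Metric.isCompact_of_isClosed_isBounded
    (Φ.isClosed_image_of_convex hcl hconv hbdd) (Φ.lipschitz.isBounded_image hbdd)
  obtain ⟨-, ⟨p, hp, rfl⟩, hmin⟩ := hcpt.exists_isMinOn (hne.image Φ) hg.continuousOn
  exact ⟨p, hp, fun q hq => hmin (mem_image_of_mem Φ hq)⟩

end Hilbert

theorem T_attains_min_on_convex_bounded_closed_general
    {d N : ℕ} (Y : Set (Fin d → ℝ))
    (L : NNReal) (σ : ℝ → ℝ) (hσ : LipschitzWith L σ)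
    (f : Fin N → Lp ℝ 2 (volume.restrict Y)) (r : Fin N → ℝ)
    (𝒜 : Set (ℝ × Lp ℝ 2 (volume.restrict Y)))
    (h𝒜ne : 𝒜.Nonempty) (h𝒜closed : IsClosed 𝒜)
    (h𝒜bdd : Bornology.IsBounded 𝒜) (h𝒜conv : Convex ℝ 𝒜) :
    ∃ p ∈ 𝒜, ∀ q ∈ 𝒜,
      (∑ j, σ (p.1 - ∫ z, p.2 z * f j z ∂(volume.restrict Y)) * r j) ≤
        ∑ j, σ (q.1 - ∫ z, q.2 z * f j z ∂(volume.restrict Y)) * r j := by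
  -- `ℝ × L²` carries the sup norm; the Hilbert space is its `L²`-product copy.
  let e := WithLp.prodContinuousLinearEquiv 2 ℝ ℝ (Lp ℝ 2 (volume.restrict Y))
  let Φ : ℝ × Lp ℝ 2 (volume.restrict Y) →L[ℝ] ℝ × (Fin N → ℝ) :=
    (ContinuousLinearMap.fst ℝ _ _).prod
      (ContinuousLinearMap.pi fun j => (innerSL ℝ (f j)).comp (ContinuousLinearMap.snd ℝ _ _))
  let g : ℝ × (Fin N → ℝ) → ℝ := fun x => ∑ j, σ (x.1 - x.2 j) * r j
  have hg : Continuous g := by have := hσ.continuous; simp only [g]; fun_prop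
  have hinner (b : Lp ℝ 2 (volume.restrict Y)) (j : Fin N) :
      ∫ z, b z * f j z ∂(volume.restrict Y) = inner ℝ (f j) b := by
    simp [L2.inner_def]
  obtain ⟨p, hp, hmin⟩ := exists_isMinOn_comp_of_convex (Φ.comp (e : _ →L[ℝ] _)) hg
    (s := e ⁻¹' 𝒜) (h𝒜ne.preimage e.surjective) (h𝒜closed.preimage e.continuous)
    (h𝒜conv.linear_preimage e.toLinearMap) (e.antilipschitz.isBounded_preimage h𝒜bdd)
  refine ⟨e p, hp, fun q hq => ?_⟩
  simpa [g, Φ, hinner] using hmin (show e.symm q ∈ e ⁻¹' 𝒜 by simpa)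

/-- On a nonempty, closed, bounded, convex set `𝒜 ⊆ ℝ × L²(Y)`, with `σ`
Lipschitz, `f₁,…,f_N ∈ L²(Y)` and `r ∈ ℝ^N`, the functional
`T_{F,r}(a,b) = ∑_j σ(a − ∫_Y b f_j) r_j` attains its minimum on `𝒜`. -/
theorem T_attains_min_on_convex_bounded_closed
    {d N : ℕ} (Y : Set (Fin d → ℝ)) (hYmeas : MeasurableSet Y)
    (L : NNReal) (σ : ℝ → ℝ) (hσ : LipschitzWith L σ)
    (f : Fin N → Lp ℝ 2 (volume.restrict Y)) (r : Fin N → ℝ)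
    (𝒜 : Set (ℝ × Lp ℝ 2 (volume.restrict Y)))
    (h𝒜ne : 𝒜.Nonempty) (h𝒜closed : IsClosed 𝒜)
    (h𝒜bdd : Bornology.IsBounded 𝒜) (h𝒜conv : Convex ℝ 𝒜) :
    ∃ p ∈ 𝒜, ∀ q ∈ 𝒜,
      (∑ j, σ (p.1 - ∫ z, p.2 z * f j z ∂(volume.restrict Y)) * r j) ≤
        ∑ j, σ (q.1 - ∫ z, q.2 z * f j z ∂(volume.restrict Y)) * r j :=
  T_attains_min_on_convex_bounded_closed_general Y L σ hσ f r 𝒜 h𝒜ne h𝒜closed h𝒜bdd h𝒜conv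
end
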